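/- arXiv:1811.11646 — 3 statements merged into one kernel-verified Lean document; each statement's English description precedes it below -/
import Mathlib

section
/- Let r be a real number and let v : ℕ → ℝ have non-increasing differences. Then the function v' : ℕ → ℝ defined by v'(i) = max{v(i), r + v(i+1)} also has non-increasing differences. -/
/-!
With `w i = max (v i) (r + v (i + 1))`, the claim is `w i + w (i + 2) ≤ 2 w (i + 1)`. The left
side is the maximum of four sums, one per choice of action at `i` and at `i + 2`, and each is
bounded by a sum of two candidates at `i + 1`: equal choices by concavity of `v` at `i + 1`
resp. `i + 2`; mixed choices either directly or after the exchange
`v i + v (i + 3) ≤ v (i + 1) + v (i + 2)`.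
-/
section

variable {α : Type*} [AddCommGroup α] [LinearOrder α]

def HasAntitoneDiffs (v : ℕ → α) : Prop :=
  Antitone fun i => v (i + 1) - v i

theorem hasAntitoneDiffs_of_succ {v : ℕ → α}
    (hv : ∀ i, v (i + 2) - v (i + 1) ≤ v (i + 1) - v i) : HasAntitoneDiffs v :=
  antitone_nat_of_succ_le hv

variable [IsOrderedAddMonoid α]

theorem HasAntitoneDiffs.add_le_add_of_le {v : ℕ → α} (hv : HasAntitoneDiffs v) {i j : ℕ}
    (hij : i ≤ j) : v (j + 1) + v i ≤ v (i + 1) + v j :=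
  sub_le_sub_iff.mp (hv hij)

theorem max_add_max_le {a b c d e : α} (hac : a + c ≤ e) (had : a + d ≤ e) (hbc : b + c ≤ e)
    (hbd : b + d ≤ e) : max a b + max c d ≤ e := by
  rw [max_add, add_max, add_max]
  exact max_le (max_le hac had) (max_le hbc hbd)

theorem HasAntitoneDiffs.max_add_succ {v : ℕ → α} (hv : HasAntitoneDiffs v) (r : α) :
    HasAntitoneDiffs fun i => max (v i) (r + v (i + 1)) := by
  refine antitone_nat_of_succ_le fun i => sub_le_sub_iff.mpr ?_
  show max (v (i + 2)) (r + v (i + 3)) + max (v i) (r + v (i + 1)) ≤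
    max (v (i + 1)) (r + v (i + 2)) + max (v (i + 1)) (r + v (i + 2))
  have h_left := le_max_left (v (i + 1)) (r + v (i + 2))
  have h_right := le_max_right (v (i + 1)) (r + v (i + 2))
  have h_mid : v (i + 2) + v i ≤ v (i + 1) + v (i + 1) :=
    hv.add_le_add_of_le (Nat.le_succ i)
  have h_succ : v (i + 3) + v (i + 1) ≤ v (i + 2) + v (i + 2) :=
    hv.add_le_add_of_le (Nat.le_succ _)
  have h_swap : v (i + 3) + v i ≤ v (i + 1) + v (i + 2) :=
    hv.add_le_add_of_le (Nat.le_add_right i 2)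
  apply max_add_max_le
  · exact h_mid.trans (add_le_add h_left h_left)
  · calc v (i + 2) + (r + v (i + 1)) = (r + v (i + 2)) + v (i + 1) := by abel
      _ ≤ _ := add_le_add h_right h_left
  · calc r + v (i + 3) + v i = r + (v (i + 3) + v i) := by abel
      _ ≤ r + (v (i + 1) + v (i + 2)) := by gcongr
      _ = (r + v (i + 2)) + v (i + 1) := by abel
      _ ≤ _ := add_le_add h_right h_left
  · calc r + v (i + 3) + (r + v (i + 1)) = r + r + (v (i + 3) + v (i + 1)) := by abel
      _ ≤ r + r + (v (i + 2) + v (i + 2)) := by gcongr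
      _ = (r + v (i + 2)) + (r + v (i + 2)) := by abel
      _ ≤ _ := add_le_add h_right h_right

end

/-- If `v : ℕ → ℝ` has non-increasing differences, then
`v' i = max (v i) (r + v (i+1))` also has non-increasing differences. -/
theorem max_preserves_nonincreasing_differences (r : ℝ) (v : ℕ → ℝ)
    (hv : ∀ i : ℕ, v (i + 2) - v (i + 1) ≤ v (i + 1) - v i) :
    ∀ i : ℕ,
      (fun i => max (v i) (r + v (i + 1))) (i + 2) - (fun i => max (v i) (r + v (i + 1))) (i + 1) ≤
      (fun i => max (v i) (r + v (i + 1))) (i + 1) - (fun i => max (v i) (r + v (i + 1))) i :=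
  fun i => (hasAntitoneDiffs_of_succ hv).max_add_succ r (Nat.le_succ i)
end

section
/- Let r be a real number and let V : ℕ → ℝ have non-increasing differences. If r + V(i+1) ≤ V(i) for some i ∈ ℕ, then r + V(j+1) ≤ V(j) for all j ≥ i. Consequently the set {i ∈ ℕ : r + V(i+1) ≤ V(i)} is upward closed, i.e., there exists a threshold T ∈ ℕ ∪ {∞} such that r + V(i+1) ≤ V(i) holds exactly for those i with i ≥ T. -/
/-! Non-increasing differences make the decrements `V i - V (i + 1)` non-decreasing, so the set
of `i` where they are at least `r` is upward closed in `ℕ`. Such a set is `{i | T ≤ i}` for `T` its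
least element, or for `T = ⊤` when it is empty. -/

theorem Nat.exists_enat_le_iff_of_monotone {p : ℕ → Prop} (hp : Monotone p) :
    ∃ T : ℕ∞, ∀ i : ℕ, p i ↔ T ≤ (i : ℕ∞) := by
  classical
  by_cases h : ∃ i, p i
  · refine ⟨Nat.find h, fun i => ⟨fun hi => ?_, fun hi => ?_⟩⟩
    · exact_mod_cast Nat.find_le hi
    · exact hp (by exact_mod_cast hi) (Nat.find_spec h)
  · exact ⟨⊤, fun i => iff_of_false (fun hi => h ⟨i, hi⟩) (by simp)⟩

section Differences

variable {α : Type*} [AddCommGroup α] [PartialOrder α] {V : ℕ → α}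

theorem antitone_sub_succ_of_sub_le
    (hV : ∀ i : ℕ, V (i + 2) - V (i + 1) ≤ V (i + 1) - V i) :
    Antitone fun i => V (i + 1) - V i :=
  antitone_nat_of_succ_le hV

theorem monotone_add_succ_le_of_sub_le [IsOrderedAddMonoid α]
    (hV : ∀ i : ℕ, V (i + 2) - V (i + 1) ≤ V (i + 1) - V i) (r : α) :
    Monotone fun i => r + V (i + 1) ≤ V i := by
  intro i j hij hi
  have hdiff := antitone_sub_succ_of_sub_le hV hij
  rw [← le_sub_iff_add_le, ← neg_sub] at hi ⊢
  exact hi.trans (neg_le_neg hdiff)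

end Differences

/-- Theorem 1 structure: if `V` has non-increasing differences then the set
`{i | r + V (i+1) ≤ V i}` is upward closed, and hence there is a threshold `T ∈ ℕ∞` such that
`r + V (i+1) ≤ V i` holds exactly for `i ≥ T`. -/
theorem threshold_structure (r : ℝ) (V : ℕ → ℝ)
    (hV : ∀ i : ℕ, V (i + 2) - V (i + 1) ≤ V (i + 1) - V i) :
    (∀ i : ℕ, r + V (i + 1) ≤ V i → ∀ j : ℕ, i ≤ j → r + V (j + 1) ≤ V j) ∧
    ∃ T : ℕ∞, ∀ i : ℕ, (r + V (i + 1) ≤ V i ↔ T ≤ (i : ℕ∞)) := by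
  have hup := monotone_add_succ_le_of_sub_le hV r
  exact ⟨fun i hi j hij => hup hij hi, Nat.exists_enat_le_iff_of_monotone hup⟩
end

section
/- For each n ∈ ℕ, the set S_n = {i ∈ ℕ : v_n(i+1) − v_n(i) ≤ −r} is upward closed in i (if i ∈ S_n and j ≥ i then j ∈ S_n); moreover S_n ⊆ S_{n+1} for every n, so the per-iteration threshold t_n = inf S_n (an element of ℕ ∪ {∞}, with t_n = ∞ if S_n is empty) is non-increasing in n. -/
/-- The value iteration sequence: `vIter p r 0 i = 0` and
`vIter p r (n+1) i = p * max (vIter p r n i) (r + vIter p r n (i+1)) + (1-p) * vIter p r n (i-1)`,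
where `i - 1` is natural subtraction, i.e. `(i-1)⁺`. -/
noncomputable def vIter (p r : ℝ) : ℕ → ℕ → ℝ
  | 0, _ => 0
  | n + 1, i =>
      p * max (vIter p r n i) (r + vIter p r n (i + 1)) + (1 - p) * vIter p r n (i - 1)

lemma vIter_succ (p r : ℝ) (n i : ℕ) :
    vIter p r (n + 1) i =
      p * max (vIter p r n i) (r + vIter p r n (i + 1)) + (1 - p) * vIter p r n (i - 1) := rfl


lemma dIter_succ (p r : ℝ) (n j : ℕ) :
    vIter p r (n + 1) (j + 2) - vIter p r (n + 1) (j + 1) =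
      p * (max (vIter p r n (j + 2)) (r + vIter p r n (j + 3)) -
        max (vIter p r n (j + 1)) (r + vIter p r n (j + 2))) +
      (1 - p) * (vIter p r n (j + 1) - vIter p r n j) := by
  rw [vIter_succ, vIter_succ]
  rw [show j + 2 - 1 = j + 1 by omega, show j + 1 - 1 = j by omega,
    show j + 2 + 1 = j + 3 by omega, show j + 1 + 1 = j + 2 by omega]
  ring

lemma dIter_succ_zero (p r : ℝ) (n : ℕ) :
    vIter p r (n + 1) 1 - vIter p r (n + 1) 0 =
      p * (max (vIter p r n 1) (r + vIter p r n 2) -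
        max (vIter p r n 0) (r + vIter p r n 1)) := by
  rw [vIter_succ, vIter_succ]
  norm_num
  ring

/-- Concavity in `i` and nonpositivity of increments. -/
lemma vIter_conc (p r : ℝ) (hp0 : 0 ≤ p) (hp1 : p ≤ 1) (hr : 0 ≤ r) (n : ℕ) :
    (∀ i, vIter p r n (i + 1) - vIter p r n i ≤ 0) ∧
    (∀ i, vIter p r n (i + 2) - vIter p r n (i + 1) ≤ vIter p r n (i + 1) - vIter p r n i) := by
  induction n with
  | zero => exact ⟨fun i => by simp [vIter], fun i => by simp [vIter]⟩
  | succ n ih =>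
    obtain ⟨hN, hC⟩ := ih
    have hMono : ∀ i, max (vIter p r n (i + 1)) (r + vIter p r n (i + 2)) ≤
        max (vIter p r n i) (r + vIter p r n (i + 1)) := by
      intro i
      have h1 := hN i
      have h2 := hN (i + 1)
      rw [show i + 1 + 1 = i + 2 by omega] at h2
      exact max_le_max (by linarith) (by linarith)
    have hMC : ∀ i, max (vIter p r n (i + 2)) (r + vIter p r n (i + 3)) +
        max (vIter p r n i) (r + vIter p r n (i + 1)) ≤
        2 * max (vIter p r n (i + 1)) (r + vIter p r n (i + 2)) := by
      intro i
      have h1 := hC i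
      have h2 := hC (i + 1)
      rw [show i + 1 + 2 = i + 3 by omega, show i + 1 + 1 = i + 2 by omega] at h2
      rcases max_cases (vIter p r n (i + 2)) (r + vIter p r n (i + 3)) with ⟨e2, c2⟩ | ⟨e2, c2⟩ <;>
      rcases max_cases (vIter p r n (i + 1)) (r + vIter p r n (i + 2)) with ⟨e1, c1⟩ | ⟨e1, c1⟩ <;>
      rcases max_cases (vIter p r n i) (r + vIter p r n (i + 1)) with ⟨e0, c0⟩ | ⟨e0, c0⟩ <;>
      rw [e0, e1, e2] <;> linarith
    constructor
    · -- nonpositivity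
      intro i
      match i with
      | 0 =>
        rw [vIter_succ, vIter_succ]
        simp only [show (1 : ℕ) - 1 = 0 from rfl, show (0 : ℕ) - 1 = 0 from rfl,
          show (0 : ℕ) + 1 = 1 from rfl, show (1 : ℕ) + 1 = 2 from rfl]
        have h := hMono 0
        simp only [show (0 : ℕ) + 1 = 1 from rfl, show (0 : ℕ) + 2 = 2 from rfl] at h
        nlinarith
      | (j + 1) =>
        rw [vIter_succ, vIter_succ]
        simp only [show j + 1 + 1 - 1 = j + 1 by omega, show j + 1 - 1 = j by omega,
          show j + 1 + 1 = j + 2 by omega]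
        have h := hMono (j + 1)
        rw [show j + 1 + 1 = j + 2 by omega, show j + 1 + 2 = j + 3 by omega] at h
        have h2 := hN j
        nlinarith
    · -- concavity
      intro i
      match i with
      | 0 =>
        rw [vIter_succ, vIter_succ, vIter_succ]
        simp only [show (2 : ℕ) - 1 = 1 from rfl, show (1 : ℕ) - 1 = 0 from rfl,
          show (0 : ℕ) - 1 = 0 from rfl, show (0 : ℕ) + 1 = 1 from rfl,
          show (1 : ℕ) + 1 = 2 from rfl, show (2 : ℕ) + 1 = 3 from rfl]
        have h := hMC 0
        simp only [show (0 : ℕ) + 1 = 1 from rfl, show (0 : ℕ) + 2 = 2 from rfl,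
          show (0 : ℕ) + 3 = 3 from rfl] at h
        have h2 := hN 0
        simp only [show (0 : ℕ) + 1 = 1 from rfl] at h2
        nlinarith
      | (j + 1) =>
        rw [vIter_succ, vIter_succ, vIter_succ]
        simp only [show j + 1 + 2 - 1 = j + 2 by omega, show j + 1 + 1 - 1 = j + 1 by omega,
          show j + 1 - 1 = j by omega, show j + 1 + 2 = j + 3 by omega,
          show j + 1 + 1 = j + 2 by omega, show j + 2 + 1 = j + 3 by omega,
          show j + 3 + 1 = j + 4 by omega]
        have h := hMC (j + 1)
        rw [show j + 1 + 2 = j + 3 by omega, show j + 1 + 3 = j + 4 by omega,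
          show j + 1 + 1 = j + 2 by omega] at h
        have h2 := hC j
        nlinarith

/-- Differences decrease with `n`. -/
lemma vIter_diff_mono (p r : ℝ) (hp0 : 0 ≤ p) (hp1 : p ≤ 1) (hr : 0 ≤ r) (n : ℕ) :
    ∀ i, vIter p r (n + 1) (i + 1) - vIter p r (n + 1) i ≤
      vIter p r n (i + 1) - vIter p r n i := by
  induction n with
  | zero =>
    have h1 : ∀ k, vIter p r 1 k = p * r := by
      intro k; simp [vIter, max_eq_right hr]
    intro i; simp [h1, vIter]
  | succ n ih =>
    -- g (i+1) ≤ g i where g i = M_{n+1} i - M_n i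
    have hg : ∀ i, (max (vIter p r (n + 1) (i + 1)) (r + vIter p r (n + 1) (i + 2)) -
          max (vIter p r n (i + 1)) (r + vIter p r n (i + 2))) ≤
        max (vIter p r (n + 1) i) (r + vIter p r (n + 1) (i + 1)) -
          max (vIter p r n i) (r + vIter p r n (i + 1)) := by
      intro i
      have e1 := ih i
      have e2 := ih (i + 1)
      rw [show i + 1 + 1 = i + 2 by omega] at e2
      set x := vIter p r (n + 1) (i + 1) - vIter p r n (i + 1) with hx
      have hub : max (vIter p r (n + 1) (i + 1)) (r + vIter p r (n + 1) (i + 2)) ≤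
          max (vIter p r n (i + 1)) (r + vIter p r n (i + 2)) + x := by
        rw [← max_add_add_right]
        exact max_le_max (le_of_eq (by rw [hx]; ring)) (by linarith)
      have hlb : max (vIter p r n i) (r + vIter p r n (i + 1)) + x ≤
          max (vIter p r (n + 1) i) (r + vIter p r (n + 1) (i + 1)) := by
        rw [← max_add_add_right]
        exact max_le_max (by linarith) (le_of_eq (by rw [hx]; ring))
      linarith
    intro i
    match i with
    | 0 =>
      rw [show (0:ℕ)+1 = 1 from rfl, dIter_succ_zero p r (n+1), dIter_succ_zero p r n]
      have h := hg 0
      simp only [show (0 : ℕ) + 1 = 1 from rfl, show (0 : ℕ) + 2 = 2 from rfl] at h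
      have t1 := mul_le_mul_of_nonneg_left h hp0
      linarith
    | (j + 1) =>
      rw [show j + 1 + 1 = j + 2 by omega, dIter_succ p r (n+1) j, dIter_succ p r n j]
      have h := hg (j + 1)
      rw [show j + 1 + 1 = j + 2 by omega, show j + 1 + 2 = j + 3 by omega] at h
      have h2 := ih j
      have t1 := mul_le_mul_of_nonneg_left h hp0
      have t2 := mul_le_mul_of_nonneg_left h2 (by linarith : (0:ℝ) ≤ 1 - p)
      linarith

/-- the sets `S n = {i | v_n (i+1) - v_n i ≤ -r}` are upward closed and
increasing in `n`, hence the per-iteration threshold `t n = inf S n ∈ ℕ∞`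
(`⊤` if `S n` is empty) is non-increasing in `n`. -/
theorem per_iteration_threshold_monotone (p r : ℝ) (hp0 : 0 ≤ p) (hp1 : p ≤ 1) (hr : 0 ≤ r) :
    (∀ n i j : ℕ, i ∈ {i : ℕ | vIter p r n (i + 1) - vIter p r n i ≤ -r} → i ≤ j →
        j ∈ {i : ℕ | vIter p r n (i + 1) - vIter p r n i ≤ -r}) ∧
    (∀ n : ℕ, {i : ℕ | vIter p r n (i + 1) - vIter p r n i ≤ -r} ⊆
        {i : ℕ | vIter p r (n + 1) (i + 1) - vIter p r (n + 1) i ≤ -r}) ∧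
    (∀ n : ℕ,
        sInf ((fun i : ℕ => (i : ℕ∞)) ''
            {i : ℕ | vIter p r (n + 1) (i + 1) - vIter p r (n + 1) i ≤ -r}) ≤
          sInf ((fun i : ℕ => (i : ℕ∞)) ''
            {i : ℕ | vIter p r n (i + 1) - vIter p r n i ≤ -r})) := by
  have hsub : ∀ n : ℕ, {i : ℕ | vIter p r n (i + 1) - vIter p r n i ≤ -r} ⊆
      {i : ℕ | vIter p r (n + 1) (i + 1) - vIter p r (n + 1) i ≤ -r} := by
    intro n i hi
    exact le_trans (vIter_diff_mono p r hp0 hp1 hr n i) hi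
  refine ⟨?_, hsub, fun n => sInf_le_sInf (Set.image_mono (hsub n))⟩
  intro n i j hi hij
  have hanti : Antitone (fun i => vIter p r n (i + 1) - vIter p r n i) := by
    apply antitone_nat_of_succ_le
    intro k
    have h := (vIter_conc p r hp0 hp1 hr n).2 k
    simpa [show k + 2 = k + 1 + 1 by omega] using h
  exact le_trans (hanti hij) hi
end
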